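/- Let a Social Choice MDP be given (a finite MDP whose state set S is a nonempty finite set of profiles and whose action set is X) with discount 0 < γ < 1, let the value function V : Π × S → ℝ satisfy the Bellman equation, and suppose the reward function R is quasi-utilitarian with strictly increasing witness f : ℝ → ℝ, i.e., R(U,a) = f(Σ_{i∈V} U_i(a)) for all U ∈ S and a ∈ X. Then a policy π* is optimal relative to V (i.e., π* ∈ argmax_{π∈Π} V(π,s) for every s ∈ S) if and only if π* is long-run quasi-utilitarian with witness f, i.e., for every s ∈ S, π* ∈ argmax_{π∈Π} Σ_{t=0}^∞ γ^t Σ_{U'∈S} μ_π^t(s,U') f(Σ_{i∈V} U'_i(π(U'))). -/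

import Mathlib

/-- The `t`-step state distribution of a policy `π` in a finite MDP:
`stepDist p π t s s'` is the probability of being in state `s'` after `t` steps
when starting in `s` and following `π`. -/
def stepDist {S A : Type*} [Fintype S] [DecidableEq S] (p : S → A → S → ℝ) (π : S → A) :
    ℕ → S → S → ℝ
  | 0, s, s' => if s' = s then 1 else 0
  | (t + 1), s, s'' => ∑ s' : S, stepDist p π t s s' * p s' (π s') s''

/-!
Unrolling the Bellman equation of a fixed policy `n` times writes its value as the first `n`
terms of the discounted reward series plus `γ ^ n` times an expectation of the value, which is
bounded because the state space is finite; hence the value *is* the long-run discounted reward.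
With a quasi-utilitarian reward the two sides of the equivalence are therefore literally the same
comparison of values.
-/

open Finset Filter Topology

section PolicyEvaluation

variable {σ A : Type*} [Fintype σ] [DecidableEq σ] {p : σ → A → σ → ℝ} (π : σ → A)

lemma stepDist_nonneg (hp : ∀ s a s', 0 ≤ p s a s') : ∀ t s s', 0 ≤ stepDist p π t s s'
  | 0, s, s' => by simp only [stepDist]; split <;> norm_num
  | t + 1, s, s'' => sum_nonneg fun s' _ =>
      mul_nonneg (stepDist_nonneg hp t s s') (hp s' (π s') s'')

lemma sum_stepDist (hp : ∀ s a, ∑ s', p s a s' = 1) : ∀ t s, ∑ s', stepDist p π t s s' = 1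
  | 0, s => by simp [stepDist]
  | t + 1, s => by
      simp only [stepDist]
      rw [sum_comm]
      simp [← mul_sum, hp, sum_stepDist hp t s]

lemma stepDist_le_one (hp0 : ∀ s a s', 0 ≤ p s a s') (hp1 : ∀ s a, ∑ s', p s a s' = 1)
    (t : ℕ) (s s' : σ) : stepDist p π t s s' ≤ 1 :=
  (single_le_sum (fun x _ => stepDist_nonneg π hp0 t s x) (mem_univ s')).trans_eq
    (sum_stepDist π hp1 t s)

lemma sum_stepDist_succ_mul (g : σ → ℝ) (t : ℕ) (s : σ) :
    ∑ s'', stepDist p π (t + 1) s s'' * g s''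
      = ∑ s', stepDist p π t s s' * ∑ s'', p s' (π s') s'' * g s'' := by
  simp only [stepDist, sum_mul, mul_sum, mul_assoc]
  exact sum_comm

lemma abs_sum_stepDist_mul_le (hp0 : ∀ s a s', 0 ≤ p s a s')
    (hp1 : ∀ s a, ∑ s', p s a s' = 1) (g : σ → ℝ) (t : ℕ) (s : σ) :
    |∑ s', stepDist p π t s s' * g s'| ≤ ∑ s', |g s'| := by
  refine (abs_sum_le_sum_abs _ _).trans (sum_le_sum fun s' _ => ?_)
  rw [abs_mul, abs_of_nonneg (stepDist_nonneg π hp0 t s s')]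
  exact mul_le_of_le_one_left (abs_nonneg _) (stepDist_le_one π hp0 hp1 t s s')

variable {γ : ℝ} {r : σ → A → ℝ} {v : σ → ℝ}

lemma eq_sum_range_add_of_bellman
    (hv : ∀ s, v s = r s (π s) + γ * ∑ s', p s (π s) s' * v s') (n : ℕ) (s : σ) :
    v s = ∑ t ∈ range n, γ ^ t * ∑ s', stepDist p π t s s' * r s' (π s')
      + γ ^ n * ∑ s', stepDist p π n s s' * v s' := by
  induction n with
  | zero => simp [stepDist]
  | succ n ih =>
    have hstep : ∑ s', stepDist p π n s s' * v s'
        = ∑ s', stepDist p π n s s' * r s' (π s')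
          + γ * ∑ s', stepDist p π (n + 1) s s' * v s' := by
      simp only [sum_stepDist_succ_mul, mul_sum, ← sum_add_distrib]
      refine sum_congr rfl fun s' _ => ?_
      rw [hv s', mul_add, mul_sum, mul_sum]
      congr 1
      exact sum_congr rfl fun _ _ => by ring
    rw [ih, hstep, sum_range_succ]
    ring

lemma hasSum_of_bellman (hp0 : ∀ s a s', 0 ≤ p s a s') (hp1 : ∀ s a, ∑ s', p s a s' = 1)
    (hγ : |γ| < 1) (hv : ∀ s, v s = r s (π s) + γ * ∑ s', p s (π s) s' * v s') (s : σ) :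
    HasSum (fun t => γ ^ t * ∑ s', stepDist p π t s s' * r s' (π s')) (v s) := by
  have hbound (g : σ → ℝ) (n : ℕ) :
      ‖γ ^ n * ∑ s', stepDist p π n s s' * g s'‖ ≤ |γ| ^ n * ∑ s', |g s'| := by
    rw [Real.norm_eq_abs, abs_mul, abs_pow]
    exact mul_le_mul_of_nonneg_left (abs_sum_stepDist_mul_le π hp0 hp1 g n s) (by positivity)
  have hsummable : Summable fun t => γ ^ t * ∑ s', stepDist p π t s s' * r s' (π s') :=
    .of_norm_bounded ((summable_geometric_of_lt_one (abs_nonneg γ) hγ).mul_right _)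
      (hbound (fun s' => r s' (π s')))
  have htail : Tendsto (fun n => γ ^ n * ∑ s', stepDist p π n s s' * v s') atTop (𝓝 0) := by
    have hgeom := (tendsto_pow_atTop_nhds_zero_of_lt_one (abs_nonneg γ) hγ).mul_const
      (∑ s', |v s'|)
    rw [zero_mul] at hgeom
    exact squeeze_zero_norm (hbound v) hgeom
  rw [hsummable.hasSum_iff_tendsto_nat]
  have hlim := (tendsto_const_nhds (x := v s)).sub htail
  rw [sub_zero] at hlim
  refine hlim.congr fun n => ?_
  linarith [eq_sum_range_add_of_bellman π hv n s]

end PolicyEvaluation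

theorem optimal_iff_long_run_quasi_utilitarian_general
    {V X : Type*} [Fintype V] [Fintype X]
    (S : Finset (V → X → ℝ))
    (R : S → X → ℝ) (p : S → X → S → ℝ)
    (hp_nonneg : ∀ (s : S) (a : X) (s' : S), 0 ≤ p s a s')
    (hp_sum : ∀ (s : S) (a : X), ∑ s' : S, p s a s' = 1)
    (γ : ℝ) (hγ0 : 0 < γ) (hγ1 : γ < 1)
    (Vf : (S → X) → S → ℝ)
    (hBellman : ∀ (π : S → X) (s : S),
      Vf π s = R s (π s) + γ * ∑ s' : S, p s (π s) s' * Vf π s')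
    (f : ℝ → ℝ)
    (hQU : ∀ (U : S) (a : X), R U a = f (∑ i : V, (U : V → X → ℝ) i a))
    (πstar : S → X) :
    (∀ (s : S) (π : S → X), Vf π s ≤ Vf πstar s)
    ↔
    (∀ (s : S) (π : S → X),
      (∑' t : ℕ, γ ^ t * ∑ U' : S,
          stepDist p π t s U' * f (∑ i : V, (U' : V → X → ℝ) i (π U')))
      ≤ (∑' t : ℕ, γ ^ t * ∑ U' : S,
          stepDist p πstar t s U' * f (∑ i : V, (U' : V → X → ℝ) i (πstar U')))) := by
  have hvalue : ∀ π s, Vf π s = ∑' t : ℕ, γ ^ t * ∑ U' : S, stepDist p π t s U' * R U' (π U') :=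
    fun π s => (hasSum_of_bellman π hp_nonneg hp_sum (abs_lt.2 ⟨by linarith, hγ1⟩)
      (hBellman π) s).tsum_eq.symm
  simp only [← hQU, ← hvalue]

/-- In a Social Choice MDP (states are a nonempty finite set `S` of
profiles `V → X → ℝ`, actions are the alternatives `X`) with discount `0 < γ < 1`,
if the value function `Vf` satisfies the Bellman equation and the reward function `R`
is quasi-utilitarian with strictly increasing witness `f`, then a policy `π*` is
optimal relative to `Vf` iff `π*` is long-run quasi-utilitarian with witness `f`. -/
theorem optimal_iff_long_run_quasi_utilitarian
    {V X : Type*} [Fintype V] [Nonempty V] [Fintype X] [Nonempty X]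
    (S : Finset (V → X → ℝ)) (hS : S.Nonempty)
    (R : S → X → ℝ) (p : S → X → S → ℝ)
    (hp_nonneg : ∀ (s : S) (a : X) (s' : S), 0 ≤ p s a s')
    (hp_sum : ∀ (s : S) (a : X), ∑ s' : S, p s a s' = 1)
    (γ : ℝ) (hγ0 : 0 < γ) (hγ1 : γ < 1)
    (Vf : (S → X) → S → ℝ)
    (hBellman : ∀ (π : S → X) (s : S),
      Vf π s = R s (π s) + γ * ∑ s' : S, p s (π s) s' * Vf π s')
    (f : ℝ → ℝ) (hf : StrictMono f)
    (hQU : ∀ (U : S) (a : X), R U a = f (∑ i : V, (U : V → X → ℝ) i a))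
    (πstar : S → X) :
    (∀ (s : S) (π : S → X), Vf π s ≤ Vf πstar s)
    ↔
    (∀ (s : S) (π : S → X),
      (∑' t : ℕ, γ ^ t * ∑ U' : S,
          stepDist p π t s U' * f (∑ i : V, (U' : V → X → ℝ) i (π U')))
      ≤ (∑' t : ℕ, γ ^ t * ∑ U' : S,
          stepDist p πstar t s U' * f (∑ i : V, (U' : V → X → ℝ) i (πstar U')))) :=
  optimal_iff_long_run_quasi_utilitarian_general S R p hp_nonneg hp_sum γ hγ0 hγ1 Vf hBellman f hQU
    πstar
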